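/- arXiv:1109.5249 — 2 statements merged into one kernel-verified Lean document; each statement's English description precedes it below -/
import Mathlib

section
/- Define d_r(x,y) = δ_r(x,y) + δ_r(y,x), where δ_r(x,y) = sup_{γ∈P(x,r)} inf_{μ∈P(y,r)} sup_{t∈[0,1]} d(γ(t),μ(t)). Then d_r is symmetric, satisfies d_r(x,y) ≥ 2d(x,y) (hence is positive for x≠y), and satisfies the triangle inequality d_r(x,z) ≤ d_r(x,y) + d_r(y,z). Thus d_r is a metric on M (assuming all the suprema and infima are finite). -/
/-!
Since every path starts at its base point, `d(x, y) ≤ supDist γ μ` for all `γ ∈ P(x,r)`,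
`μ ∈ P(y,r)`, hence `d(x, y) ≤ δ_r(x, y)`. The sup distance between paths satisfies the triangle
inequality, and a `sup inf` of a function obeying the triangle inequality obeys it again:
pursuing `γ` by `μ` and then `μ` by `ν` pursues `γ` by `ν`.
-/

open Set

noncomputable def supDist {M : Type*} [MetricSpace M] (γ μ : ℝ → M) : ℝ :=
  sSup ((fun t => dist (γ t) (μ t)) '' Icc (0:ℝ) 1)

noncomputable def pdelta {M : Type*} [MetricSpace M] (P : M → ℝ → Set (ℝ → M))
    (r : ℝ) (x y : M) : ℝ :=
  sSup ((fun γ => sInf ((fun μ => supDist γ μ) '' P y r)) '' P x r)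

/-- The symmetrized pursuit distance d_r(x,y) = δ_r(x,y) + δ_r(y,x). -/
noncomputable def pdist {M : Type*} [MetricSpace M] (P : M → ℝ → Set (ℝ → M))
    (r : ℝ) (x y : M) : ℝ :=
  pdelta P r x y + pdelta P r y x

section SupInf

variable {α : Type*} (D : α → α → ℝ) {A B C : Set α}

theorem le_sSup_sInf_image {c : ℝ} (hA : A.Nonempty) (hB : B.Nonempty)
    (hAB : BddAbove ((fun a => sInf (D a '' B)) '' A)) (hc : ∀ a ∈ A, ∀ b ∈ B, c ≤ D a b) :
    c ≤ sSup ((fun a => sInf (D a '' B)) '' A) := by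
  obtain ⟨a, ha⟩ := hA
  refine le_trans ?_ (le_csSup hAB (mem_image_of_mem _ ha))
  exact le_csInf (hB.image _) (forall_mem_image.2 (hc a ha))

theorem sSup_sInf_image_triangle (hA : A.Nonempty) (hB : B.Nonempty) (hC : C.Nonempty)
    (hAC : ∀ a ∈ A, ∀ c ∈ C, 0 ≤ D a c)
    (hAB : BddAbove ((fun a => sInf (D a '' B)) '' A))
    (hBC : BddAbove ((fun b => sInf (D b '' C)) '' B))
    (htri : ∀ a ∈ A, ∀ b ∈ B, ∀ c ∈ C, D a c ≤ D a b + D b c) :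
    sSup ((fun a => sInf (D a '' C)) '' A) ≤
      sSup ((fun a => sInf (D a '' B)) '' A) + sSup ((fun b => sInf (D b '' C)) '' B) := by
  set δBC := sSup ((fun b => sInf (D b '' C)) '' B)
  refine csSup_le (hA.image _) (forall_mem_image.2 fun a ha => ?_)
  have hbelow : BddBelow (D a '' C) := ⟨0, forall_mem_image.2 (hAC a ha)⟩
  have hvia : ∀ b ∈ B, sInf (D a '' C) - δBC ≤ D a b := by
    intro b hb
    have hb_le : sInf (D b '' C) ≤ δBC := le_csSup hBC (mem_image_of_mem _ hb)
    have hpursuit : sInf (D a '' C) ≤ D a b + sInf (D b '' C) := by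
      rw [← sub_le_iff_le_add']
      refine le_csInf (hC.image _) (forall_mem_image.2 fun c hc => ?_)
      rw [sub_le_iff_le_add']
      exact (csInf_le hbelow (mem_image_of_mem _ hc)).trans (htri a ha b hb c hc)
    linarith
  have hAB_a : sInf (D a '' B) ≤ sSup ((fun a => sInf (D a '' B)) '' A) :=
    le_csSup hAB (mem_image_of_mem _ ha)
  have := le_csInf (hB.image _) (forall_mem_image.2 hvia)
  linarith

end SupInf

section Paths

variable {M : Type*} [MetricSpace M]

theorem dist_le_supDist {γ μ : ℝ → M} (h : BddAbove ((fun t => dist (γ t) (μ t)) '' Icc 0 1))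
    {t : ℝ} (ht : t ∈ Icc (0:ℝ) 1) : dist (γ t) (μ t) ≤ supDist γ μ :=
  le_csSup h (mem_image_of_mem _ ht)

theorem supDist_triangle {γ μ ν : ℝ → M}
    (hγμ : BddAbove ((fun t => dist (γ t) (μ t)) '' Icc 0 1))
    (hμν : BddAbove ((fun t => dist (μ t) (ν t)) '' Icc 0 1)) :
    supDist γ ν ≤ supDist γ μ + supDist μ ν := by
  refine csSup_le ((nonempty_Icc.2 zero_le_one).image _) (forall_mem_image.2 fun t ht => ?_)
  exact (dist_triangle _ (μ t) _).trans
    (add_le_add (dist_le_supDist hγμ ht) (dist_le_supDist hμν ht))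

variable {P : M → ℝ → Set (ℝ → M)} {r : ℝ}

theorem dist_le_pdelta (hstart : ∀ z, ∀ γ ∈ P z r, γ 0 = z) (hne : ∀ z, (P z r).Nonempty)
    (hfin : ∀ x y : M, ∀ γ ∈ P x r, ∀ μ ∈ P y r,
      BddAbove ((fun t => dist (γ t) (μ t)) '' Icc (0:ℝ) 1))
    (hbdd : ∀ x y : M,
      BddAbove ((fun γ => sInf ((fun μ => supDist γ μ) '' P y r)) '' P x r)) (x y : M) :
    dist x y ≤ pdelta P r x y := by
  refine le_sSup_sInf_image supDist (hne x) (hne y) (hbdd x y) fun γ hγ μ hμ => ?_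
  have := dist_le_supDist (hfin x y γ hγ μ hμ) (left_mem_Icc.2 zero_le_one)
  rwa [hstart x γ hγ, hstart y μ hμ] at this

theorem pdelta_triangle (hne : ∀ z, (P z r).Nonempty)
    (hfin : ∀ x y : M, ∀ γ ∈ P x r, ∀ μ ∈ P y r,
      BddAbove ((fun t => dist (γ t) (μ t)) '' Icc (0:ℝ) 1))
    (hbdd : ∀ x y : M,
      BddAbove ((fun γ => sInf ((fun μ => supDist γ μ) '' P y r)) '' P x r)) (x y z : M) :
    pdelta P r x z ≤ pdelta P r x y + pdelta P r y z :=
  sSup_sInf_image_triangle supDist (hne x) (hne y) (hne z)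
    (fun γ hγ ν hν => dist_nonneg.trans
      (dist_le_supDist (hfin x z γ hγ ν hν) (left_mem_Icc.2 zero_le_one)))
    (hbdd x y) (hbdd y z)
    (fun γ hγ μ hμ ν hν => supDist_triangle (hfin x y γ hγ μ hμ) (hfin y z μ hμ ν hν))

end Paths

theorem stmt1_general {M : Type*} [MetricSpace M]
    (P : M → ℝ → Set (ℝ → M)) (r : ℝ)
    (hstart : ∀ z, ∀ γ ∈ P z r, γ 0 = z)
    (hne : ∀ z, (P z r).Nonempty)
    (hfin : ∀ x y : M, ∀ γ ∈ P x r, ∀ μ ∈ P y r,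
      BddAbove ((fun t => dist (γ t) (μ t)) '' Icc (0:ℝ) 1))
    (hbdd : ∀ x y : M,
      BddAbove ((fun γ => sInf ((fun μ => supDist γ μ) '' P y r)) '' P x r)) :
    (∀ x y : M, pdist P r x y = pdist P r y x) ∧
    (∀ x y : M, 2 * dist x y ≤ pdist P r x y) ∧
    (∀ x y : M, x ≠ y → 0 < pdist P r x y) ∧
    (∀ x y z : M, pdist P r x z ≤ pdist P r x y + pdist P r y z) := by
  have hlower : ∀ x y, 2 * dist x y ≤ pdist P r x y := fun x y => by
    have := dist_le_pdelta hstart hne hfin hbdd x y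
    have := dist_le_pdelta hstart hne hfin hbdd y x
    rw [dist_comm] at this
    unfold pdist
    linarith
  refine ⟨fun x y => add_comm _ _, hlower, fun x y hxy => ?_, fun x y z => ?_⟩
  · linarith [hlower x y, dist_pos.2 hxy]
  · have := pdelta_triangle hne hfin hbdd x y z
    have := pdelta_triangle hne hfin hbdd z y x
    unfold pdist
    linarith

theorem stmt1 {M : Type*} [MetricSpace M] [CompactSpace M]
    (P : M → ℝ → Set (ℝ → M)) (r : ℝ)
    (hstart : ∀ z, ∀ γ ∈ P z r, γ 0 = z)
    (hcont : ∀ z, ∀ γ ∈ P z r, ContinuousOn γ (Icc (0:ℝ) 1))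
    (hne : ∀ z, (P z r).Nonempty)
    (hfin : ∀ x y : M, ∀ γ ∈ P x r, ∀ μ ∈ P y r,
      BddAbove ((fun t => dist (γ t) (μ t)) '' Icc (0:ℝ) 1))
    (hbdd : ∀ x y : M,
      BddAbove ((fun γ => sInf ((fun μ => supDist γ μ) '' P y r)) '' P x r)) :
    (∀ x y : M, pdist P r x y = pdist P r y x) ∧
    (∀ x y : M, 2 * dist x y ≤ pdist P r x y) ∧
    (∀ x y : M, x ≠ y → 0 < pdist P r x y) ∧
    (∀ x y z : M, pdist P r x z ≤ pdist P r x y + pdist P r y z) :=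
  stmt1_general P r hstart hne hfin hbdd
end

section
/- Monotonicity in r via reparametrization: if r > s > 0, and the path families satisfy the reparametrization property that every path in P(x,s) can be sped up into P(x,r) (precisely: for γ∈P(x,s), the path γ̂(t)=γ(tr/s) for t≤s/r, γ̂(t)=γ(1) for t>s/r lies in P(x,r)) and conversely every path in P(y,r) can be truncated into P(y,s) (μ̌(t) = μ(ts/r) lies in P(y,s)), then δ_s(x,y) ≤ δ_r(x,y) for all x,y, and hence d_s(x,y) ≤ d_r(x,y). -/
open Set

/-!
Speeding a path of `P(x,s)` up to `γ̂ ∈ P(x,r)` and truncating a path `μ ∈ P(y,r)` to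
`μ̌ ∈ P(y,s)` are both reparametrizations by `φ t = t s / r`, which maps `[0,1]` into itself:
`γ = γ̂ ∘ φ` and `μ̌ = μ ∘ φ` on `[0,1]`. Hence `sup_t d(γ t, μ̌ t) ≤ sup_t d(γ̂ t, μ t)`, so
every competitor `μ` against `γ̂` yields a competitor `μ̌` against `γ` that is at least as close,
and taking the infimum over `μ` and then the supremum over `γ` gives `δ_s ≤ δ_r`.
-/

section PathFamily

noncomputable def pathSpeedUp {α : Type*} (s r : ℝ) (γ : ℝ → α) : ℝ → α :=
  fun t => if t ≤ s / r then γ (t * r / s) else γ 1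

noncomputable def pathTruncate {α : Type*} (s r : ℝ) (μ : ℝ → α) : ℝ → α :=
  fun t => μ (t * s / r)

lemma pathSpeedUp_apply_mul_div {α : Type*} {s r : ℝ} (hs : 0 < s) (hr : 0 < r) (γ : ℝ → α)
    {t : ℝ} (ht : t ≤ 1) : pathSpeedUp s r γ (t * s / r) = γ t := by
  have hle : t * s / r ≤ s / r := by
    gcongr
    exact mul_le_of_le_one_left hs.le ht
  simp only [pathSpeedUp, if_pos hle]
  congr 1
  field_simp

variable {M : Type*} [MetricSpace M]

lemma supDist_nonneg (γ μ : ℝ → M) : 0 ≤ supDist γ μ :=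
  Real.sSup_nonneg <| by
    rintro _ ⟨t, -, rfl⟩
    exact dist_nonneg

lemma pdelta_nonneg (P : M → ℝ → Set (ℝ → M)) (r : ℝ) (x y : M) : 0 ≤ pdelta P r x y :=
  Real.sSup_nonneg <| by
    rintro _ ⟨γ, -, rfl⟩
    exact Real.sInf_nonneg <| by
      rintro _ ⟨μ, -, rfl⟩
      exact supDist_nonneg γ μ

lemma supDist_le_of_reparam {γ μ γ₁ μ₁ : ℝ → M} {φ : ℝ → ℝ}
    (hφ : MapsTo φ (Icc 0 1) (Icc 0 1))
    (hγ : ∀ t ∈ Icc (0:ℝ) 1, γ₁ t = γ (φ t)) (hμ : ∀ t ∈ Icc (0:ℝ) 1, μ₁ t = μ (φ t))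
    (hb : BddAbove ((fun t => dist (γ t) (μ t)) '' Icc 0 1)) :
    supDist γ₁ μ₁ ≤ supDist γ μ := by
  refine csSup_le ((nonempty_Icc.2 zero_le_one).image _) ?_
  rintro _ ⟨t, ht, rfl⟩
  simp only [hγ t ht, hμ t ht]
  exact le_csSup hb (mem_image_of_mem _ (hφ ht))

lemma supDist_pathTruncate_le {s r : ℝ} (hs : 0 < s) (hsr : s ≤ r) {γ μ : ℝ → M}
    (hb : BddAbove ((fun t => dist (pathSpeedUp s r γ t) (μ t)) '' Icc 0 1)) :
    supDist γ (pathTruncate s r μ) ≤ supDist (pathSpeedUp s r γ) μ := by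
  have hr : 0 < r := hs.trans_le hsr
  refine supDist_le_of_reparam (φ := fun t => t * s / r) ?_
    (fun t ht => (pathSpeedUp_apply_mul_div hs hr γ ht.2).symm) (fun _ _ => rfl) hb
  intro t ⟨ht₀, ht₁⟩
  refine ⟨by positivity, (div_le_one hr).2 ?_⟩
  nlinarith

lemma pdelta_le_pdelta_of_transfer {P : M → ℝ → Set (ℝ → M)} {s r : ℝ} {x y : M}
    (hne : (P y r).Nonempty)
    (hbdd : BddAbove ((fun γ => sInf ((fun μ => supDist γ μ) '' P y r)) '' P x r))
    {F G : (ℝ → M) → (ℝ → M)} (hF : MapsTo F (P x s) (P x r)) (hG : MapsTo G (P y r) (P y s))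
    (hFG : ∀ γ ∈ P x s, ∀ μ ∈ P y r, supDist γ (G μ) ≤ supDist (F γ) μ) :
    pdelta P s x y ≤ pdelta P r x y := by
  refine Real.sSup_le ?_ (pdelta_nonneg P r x y)
  rintro _ ⟨γ, hγ, rfl⟩
  have hinf : sInf ((fun μ => supDist γ μ) '' P y s)
      ≤ sInf ((fun μ => supDist (F γ) μ) '' P y r) := by
    refine le_csInf (hne.image _) ?_
    rintro _ ⟨μ, hμ, rfl⟩
    have hbelow : BddBelow ((fun μ => supDist γ μ) '' P y s) :=
      ⟨0, by rintro _ ⟨ν, -, rfl⟩; exact supDist_nonneg γ ν⟩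
    exact (csInf_le hbelow (mem_image_of_mem _ (hG hμ))).trans (hFG γ hγ μ hμ)
  exact hinf.trans (le_csSup hbdd (mem_image_of_mem _ (hF hγ)))

end PathFamily

theorem stmt6_general {M : Type*} [MetricSpace M] (P : M → ℝ → Set (ℝ → M))
    (r s : ℝ) (hs : 0 < s) (hsr : s < r)
    (hcont : ∀ z t, ∀ γ ∈ P z t, ContinuousOn γ (Icc (0:ℝ) 1))
    (hne : ∀ z t, (P z t).Nonempty)
    -- speeding up: every path in P(x,s) gives a path in P(x,r)
    (hspeed : ∀ x : M, ∀ γ ∈ P x s,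
      (fun t : ℝ => if t ≤ s / r then γ (t * r / s) else γ 1) ∈ P x r)
    -- truncation: every path in P(y,r) gives a path in P(y,s)
    (htrunc : ∀ y : M, ∀ μ ∈ P y r,
      (fun t : ℝ => μ (t * s / r)) ∈ P y s)
    (hbdd : ∀ t : ℝ, ∀ x y : M,
      BddAbove ((fun γ => sInf ((fun μ => supDist γ μ) '' P y t)) '' P x t)) :
    (∀ x y : M, pdelta P s x y ≤ pdelta P r x y) ∧
    (∀ x y : M, pdist P s x y ≤ pdist P r x y) := by
  have hdelta : ∀ x y : M, pdelta P s x y ≤ pdelta P r x y := fun x y =>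
    pdelta_le_pdelta_of_transfer (hne y r) (hbdd r x y)
      (F := pathSpeedUp s r) (G := pathTruncate s r)
      (fun γ hγ => hspeed x γ hγ) (fun μ hμ => htrunc y μ hμ) fun γ hγ μ hμ =>
        supDist_pathTruncate_le hs hsr.le <| isCompact_Icc.bddAbove_image <|
          continuous_dist.comp_continuousOn <|
            (hcont x r _ (hspeed x γ hγ)).prodMk (hcont y r μ hμ)
  exact ⟨hdelta, fun x y => add_le_add (hdelta x y) (hdelta y x)⟩

theorem stmt6 {M : Type*} [MetricSpace M] (P : M → ℝ → Set (ℝ → M))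
    (r s : ℝ) (hs : 0 < s) (hsr : s < r)
    (hstart : ∀ z t, ∀ γ ∈ P z t, γ 0 = z)
    (hcont : ∀ z t, ∀ γ ∈ P z t, ContinuousOn γ (Icc (0:ℝ) 1))
    (hne : ∀ z t, (P z t).Nonempty)
    -- speeding up: every path in P(x,s) gives a path in P(x,r)
    (hspeed : ∀ x : M, ∀ γ ∈ P x s,
      (fun t : ℝ => if t ≤ s / r then γ (t * r / s) else γ 1) ∈ P x r)
    -- truncation: every path in P(y,r) gives a path in P(y,s)
    (htrunc : ∀ y : M, ∀ μ ∈ P y r,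
      (fun t : ℝ => μ (t * s / r)) ∈ P y s)
    (hbdd : ∀ t : ℝ, ∀ x y : M,
      BddAbove ((fun γ => sInf ((fun μ => supDist γ μ) '' P y t)) '' P x t)) :
    (∀ x y : M, pdelta P s x y ≤ pdelta P r x y) ∧
    (∀ x y : M, pdist P s x y ≤ pdist P r x y) :=
  stmt6_general P r s hs hsr hcont hne hspeed htrunc hbdd
end
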